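/- Consider the coupled projected recursions x_{t+1} = Π_X[x_t + α(A_ff x_t + A_fs y_t − b1 + ε_t)] and y_{t+1} = Π_Y[y_t + β(A_sf x_t + A_ss y_t − b2 + ψ_t)] with constant step sizes α, β > 0, x_0 ∈ X, y_0 ∈ Y, and arbitrary noise sequences (ε_t) ⊆ ℝ^n, (ψ_t) ⊆ ℝ^m. Suppose U_Xᵀ A_ff U_X is invertible with c1 := U_X (U_Xᵀ A_ff U_X)^{-1} U_Xᵀ, and U_Yᵀ (A_ss − A_sf c1 A_fs) U_Y is invertible with c2 := U_Y (U_Yᵀ (A_ss − A_sf c1 A_fs) U_Y)^{-1} U_Yᵀ, and let (x_p*, y_p*) ∈ X × Y be the constrained solution satisfying Π_X(A_ff x_p* + A_fs y_p* − b1) = 0 and Π_Y(A_sf x_p* + A_ss y_p* − b2) = 0. Then for every T ≥ 1, with x̄_T := (1/T)Σ_{t=0}^{T−1} x_t, ȳ_T := (1/T)Σ_{t=0}^{T−1} y_t, ε̄_T := Σ_{t=0}^{T−1} ε_t, ψ̄_T := Σ_{t=0}^{T−1} ψ_t, one has the exact identity ȳ_T − y_p* = (c2/T)((y_T − y_0)/β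 − Π_Y ψ̄_T) − c2 A_sf (c1/T)((x_T − x_0)/α − Π_X ε̄_T). -/

import Mathlib

/-! Summing the projected recursions telescopes them: since every iterate lies in the constraint
subspace, `Π_X x_t = x_t`, and the sum of `(x_{t+1} - x_t)/α` is the projected sum of the drifts.
After centring at the constrained solution this gives two projected linear equations
`Π_X (A_ff u + A_fs v) = R_x`, `Π_Y (A_sf u + A_ss v) = R_y` for `u = Σ (x_t - x_p*)`,
`v = Σ (y_t - y_p*)`, which block elimination (`c1` for the fast block, then `c2` for the
Schur complement) solves exactly for `v`. -/

open Matrix MeasureTheory Finset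
open scoped BigOperators

noncomputable section
namespace TTSA

abbrev E (n : ℕ) : Type := EuclideanSpace ℝ (Fin n)

def mv {k l : ℕ} (M : Matrix (Fin k) (Fin l) ℝ) (x : E l) : E k :=
  Matrix.toEuclideanLin M x

def specNorm {k l : ℕ} (M : Matrix (Fin k) (Fin l) ℝ) : ℝ :=
  ‖LinearMap.toContinuousLinearMap (Matrix.toEuclideanLin M)‖

def sigmaMin {k : ℕ} (M : Matrix (Fin k) (Fin k) ℝ) : ℝ :=
  sInf ((fun v : E k => ‖mv M v‖) '' {v | ‖v‖ = 1})

def resolvent {k l : ℕ} (U : Matrix (Fin k) (Fin l) ℝ) (A : Matrix (Fin k) (Fin k) ℝ) :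
    Matrix (Fin k) (Fin k) ℝ :=
  U * (Uᵀ * A * U)⁻¹ * Uᵀ

section MatrixAction

variable {k l p : ℕ}

lemma mv_mul (M : Matrix (Fin k) (Fin l) ℝ) (N : Matrix (Fin l) (Fin p) ℝ) (v : E p) :
    mv (M * N) v = mv M (mv N v) := by
  simp [mv]

lemma sub_mv (M N : Matrix (Fin k) (Fin l) ℝ) (v : E l) : mv (M - N) v = mv M v - mv N v := by
  simp [mv]

lemma mv_add (M : Matrix (Fin k) (Fin l) ℝ) (a b : E l) : mv M (a + b) = mv M a + mv M b :=
  map_add _ a b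

lemma mv_sub (M : Matrix (Fin k) (Fin l) ℝ) (a b : E l) : mv M (a - b) = mv M a - mv M b :=
  map_sub _ a b

lemma mv_smul (M : Matrix (Fin k) (Fin l) ℝ) (c : ℝ) (a : E l) : mv M (c • a) = c • mv M a :=
  map_smul _ c a

lemma mv_sum (M : Matrix (Fin k) (Fin l) ℝ) {ι : Type*} (s : Finset ι) (f : ι → E l) :
    mv M (∑ i ∈ s, f i) = ∑ i ∈ s, mv M (f i) :=
  map_sum _ f s

lemma mem_range_mv_iff (U : Matrix (Fin k) (Fin l) ℝ) (u : E k) :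
    u ∈ Set.range (mv U) ↔ u ∈ LinearMap.range (Matrix.toEuclideanLin U) :=
  Iff.rfl

end MatrixAction

section Projection

variable {k l : ℕ} {U : Matrix (Fin k) (Fin l) ℝ}

lemma mv_proj_of_mem_range (hU : Uᵀ * U = 1) {u : E k} (hu : u ∈ Set.range (mv U)) :
    mv (U * Uᵀ) u = u := by
  obtain ⟨w, rfl⟩ := hu
  rw [← mv_mul, Matrix.mul_assoc, hU, Matrix.mul_one]

lemma resolvent_mul_proj (hU : Uᵀ * U = 1) (A : Matrix (Fin k) (Fin k) ℝ) :
    resolvent U A * (U * Uᵀ) = resolvent U A := by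
  simp only [resolvent, Matrix.mul_assoc, ← Matrix.mul_assoc Uᵀ U, hU, Matrix.one_mul]

lemma resolvent_mul_mul_self {A : Matrix (Fin k) (Fin k) ℝ} (hA : IsUnit (Uᵀ * A * U)) :
    resolvent U A * A * U = U := by
  have hinv : (Uᵀ * A * U)⁻¹ * (Uᵀ * A * U) = 1 :=
    Matrix.nonsing_inv_mul _ ((Matrix.isUnit_iff_isUnit_det _).mp hA)
  simp only [resolvent, Matrix.mul_assoc] at hinv ⊢
  rw [hinv, Matrix.mul_one]

lemma mv_resolvent_mv_of_mem_range {A : Matrix (Fin k) (Fin k) ℝ} (hA : IsUnit (Uᵀ * A * U))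
    {u : E k} (hu : u ∈ Set.range (mv U)) : mv (resolvent U A) (mv A u) = u := by
  obtain ⟨w, rfl⟩ := hu
  rw [← mv_mul, ← mv_mul, resolvent_mul_mul_self hA]

lemma eq_mv_resolvent_sub_of_proj_eq (hU : Uᵀ * U = 1) {A : Matrix (Fin k) (Fin k) ℝ}
    (hA : IsUnit (Uᵀ * A * U)) {u w R : E k} (hu : u ∈ Set.range (mv U))
    (h : mv (U * Uᵀ) (mv A u + w) = R) :
    u = mv (resolvent U A) R - mv (resolvent U A) w := by
  rw [← h, ← mv_mul, resolvent_mul_proj hU, mv_add, mv_resolvent_mv_of_mem_range hA hu,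
    add_sub_cancel_right]

end Projection

lemma eq_schur_resolvent_of_proj_eq {n m d r : ℕ}
    {Aff : Matrix (Fin n) (Fin n) ℝ} {Afs : Matrix (Fin n) (Fin m) ℝ}
    {Asf : Matrix (Fin m) (Fin n) ℝ} {Ass : Matrix (Fin m) (Fin m) ℝ}
    {UX : Matrix (Fin n) (Fin d) ℝ} {UY : Matrix (Fin m) (Fin r) ℝ}
    (hUX : UXᵀ * UX = 1) (hUY : UYᵀ * UY = 1)
    (h1 : IsUnit (UXᵀ * Aff * UX))
    (h2 : IsUnit (UYᵀ * (Ass - Asf * resolvent UX Aff * Afs) * UY))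
    {u Rx : E n} {v Ry : E m} (hu : u ∈ Set.range (mv UX)) (hv : v ∈ Set.range (mv UY))
    (hx : mv (UX * UXᵀ) (mv Aff u + mv Afs v) = Rx)
    (hy : mv (UY * UYᵀ) (mv Asf u + mv Ass v) = Ry) :
    v = mv (resolvent UY (Ass - Asf * resolvent UX Aff * Afs)) Ry -
      mv (resolvent UY (Ass - Asf * resolvent UX Aff * Afs) * Asf)
        (mv (resolvent UX Aff) Rx) := by
  set c1 := resolvent UX Aff
  have hu' : u = mv c1 Rx - mv c1 (mv Afs v) := eq_mv_resolvent_sub_of_proj_eq hUX h1 hu hx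
  have hschur : mv (UY * UYᵀ)
      (mv (Ass - Asf * c1 * Afs) v + mv Asf (mv c1 Rx)) = Ry := by
    rw [← hy, hu']
    simp only [sub_mv, mv_mul, mv_sub]
    abel_nf
  rw [mv_mul]
  exact eq_mv_resolvent_sub_of_proj_eq hUY h2 hv hschur

section ProjectedRecursion

variable {k l : ℕ} {U : Matrix (Fin k) (Fin l) ℝ}

lemma mem_range_of_projected_rec {z g : ℕ → E k} (hz0 : z 0 ∈ Set.range (mv U))
    (hrec : ∀ t, z (t + 1) = mv (U * Uᵀ) (g t)) (t : ℕ) : z t ∈ Set.range (mv U) := by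
  cases t with
  | zero => exact hz0
  | succ t => exact ⟨_, (hrec t ▸ mv_mul U Uᵀ (g t)).symm⟩

lemma inv_smul_sub_eq_proj_sum_of_projected_rec (hU : Uᵀ * U = 1) {γ : ℝ} (hγ : γ ≠ 0)
    {z g : ℕ → E k} (hz0 : z 0 ∈ Set.range (mv U))
    (hrec : ∀ t, z (t + 1) = mv (U * Uᵀ) (z t + γ • g t)) (T : ℕ) :
    γ⁻¹ • (z T - z 0) = mv (U * Uᵀ) (∑ t ∈ range T, g t) := by
  have hstep : ∀ t, z (t + 1) - z t = γ • mv (U * Uᵀ) (g t) := fun t => by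
    rw [hrec t, mv_add, mv_smul,
      mv_proj_of_mem_range hU (mem_range_of_projected_rec hz0 hrec t), add_sub_cancel_left]
  rw [← Finset.sum_range_sub, Finset.sum_congr rfl fun t _ => hstep t, ← Finset.smul_sum,
    smul_smul, inv_mul_cancel₀ hγ, one_smul, mv_sum]

end ProjectedRecursion

lemma mv_sum_affine_eq {k l p : ℕ} (P : Matrix (Fin k) (Fin k) ℝ) (A : Matrix (Fin k) (Fin l) ℝ)
    (B : Matrix (Fin k) (Fin p) ℝ) (b : E k) {xp : E l} {yp : E p}
    (hsol : mv P (mv A xp + mv B yp - b) = 0) (x : ℕ → E l) (y : ℕ → E p) (e : ℕ → E k)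
    (T : ℕ) :
    mv P (∑ t ∈ range T, (mv A (x t) + mv B (y t) - b + e t)) =
      mv P (mv A (∑ t ∈ range T, (x t - xp)) + mv B (∑ t ∈ range T, (y t - yp))) +
        mv P (∑ t ∈ range T, e t) := by
  have hsplit : ∀ t, mv A (x t) + mv B (y t) - b + e t =
      (mv A (x t - xp) + mv B (y t - yp) + e t) + (mv A xp + mv B yp - b) := fun t => by
    rw [mv_sub, mv_sub]
    abel
  simp only [hsplit, Finset.sum_add_distrib, Finset.sum_const, mv_add, mv_sum]
  rw [← Nat.cast_smul_eq_nsmul ℝ, mv_smul, hsol, smul_zero, add_zero]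

lemma inv_smul_sum_sub_eq {V : Type*} [AddCommGroup V] [Module ℝ V] {T : ℕ} (hT : T ≠ 0)
    (y : ℕ → V) (c : V) :
    (T : ℝ)⁻¹ • (∑ t ∈ range T, y t) - c = (T : ℝ)⁻¹ • ∑ t ∈ range T, (y t - c) := by
  have hT' : (T : ℝ) ≠ 0 := Nat.cast_ne_zero.mpr hT
  rw [Finset.sum_sub_distrib, Finset.sum_const, Finset.card_range, ← Nat.cast_smul_eq_nsmul ℝ,
    smul_sub, smul_smul, inv_mul_cancel₀ hT', one_smul]

/-- exact identity for the slow Polyak–Ruppert average around the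
constrained solution, with `c1 = resolvent U_X A_ff` and
`c2 = resolvent U_Y (A_ss - A_sf c1 A_fs)`. -/
theorem slow_average_exact_identity {n m d r : ℕ}
    (Aff : Matrix (Fin n) (Fin n) ℝ) (Afs : Matrix (Fin n) (Fin m) ℝ)
    (Asf : Matrix (Fin m) (Fin n) ℝ) (Ass : Matrix (Fin m) (Fin m) ℝ)
    (b1 : E n) (b2 : E m)
    (UX : Matrix (Fin n) (Fin d) ℝ) (UY : Matrix (Fin m) (Fin r) ℝ)
    (hUX : UXᵀ * UX = 1) (hUY : UYᵀ * UY = 1)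
    (α β : ℝ) (hα : 0 < α) (hβ : 0 < β)
    (x : ℕ → E n) (y : ℕ → E m) (ε : ℕ → E n) (ψ : ℕ → E m)
    (hx0 : x 0 ∈ Set.range (mv UX)) (hy0 : y 0 ∈ Set.range (mv UY))
    (hrecx : ∀ t : ℕ, x (t + 1) =
      mv (UX * UXᵀ) (x t + α • (mv Aff (x t) + mv Afs (y t) - b1 + ε t)))
    (hrecy : ∀ t : ℕ, y (t + 1) =
      mv (UY * UYᵀ) (y t + β • (mv Asf (x t) + mv Ass (y t) - b2 + ψ t)))
    (h1 : IsUnit (UXᵀ * Aff * UX))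
    (h2 : IsUnit (UYᵀ * (Ass - Asf * resolvent UX Aff * Afs) * UY))
    (xp : E n) (yp : E m)
    (hxp : xp ∈ Set.range (mv UX)) (hyp : yp ∈ Set.range (mv UY))
    (hsolx : mv (UX * UXᵀ) (mv Aff xp + mv Afs yp - b1) = 0)
    (hsoly : mv (UY * UYᵀ) (mv Asf xp + mv Ass yp - b2) = 0) :
    ∀ T : ℕ, 1 ≤ T →
      (T : ℝ)⁻¹ • (∑ t ∈ Finset.range T, y t) - yp =
      (T : ℝ)⁻¹ • mv (resolvent UY (Ass - Asf * resolvent UX Aff * Afs))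
          (β⁻¹ • (y T - y 0) - mv (UY * UYᵀ) (∑ t ∈ Finset.range T, ψ t)) -
      mv (resolvent UY (Ass - Asf * resolvent UX Aff * Afs) * Asf)
        ((T : ℝ)⁻¹ • mv (resolvent UX Aff)
          (α⁻¹ • (x T - x 0) - mv (UX * UXᵀ) (∑ t ∈ Finset.range T, ε t))) := by
  intro T hT
  have hx := inv_smul_sub_eq_proj_sum_of_projected_rec hUX hα.ne' hx0 hrecx T
  have hy := inv_smul_sub_eq_proj_sum_of_projected_rec hUY hβ.ne' hy0 hrecy T
  rw [mv_sum_affine_eq _ _ _ _ hsolx] at hx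
  rw [mv_sum_affine_eq _ _ _ _ hsoly] at hy
  have hu : ∑ t ∈ range T, (x t - xp) ∈ Set.range (mv UX) := (mem_range_mv_iff _ _).mpr <|
    Submodule.sum_mem _ fun t _ => sub_mem (mem_range_of_projected_rec hx0 hrecx t) hxp
  have hv : ∑ t ∈ range T, (y t - yp) ∈ Set.range (mv UY) := (mem_range_mv_iff _ _).mpr <|
    Submodule.sum_mem _ fun t _ => sub_mem (mem_range_of_projected_rec hy0 hrecy t) hyp
  rw [inv_smul_sum_sub_eq (by omega),
    eq_schur_resolvent_of_proj_eq hUX hUY h1 h2 hu hv (eq_sub_of_add_eq hx.symm)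
      (eq_sub_of_add_eq hy.symm), smul_sub, mv_smul]

end TTSA
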